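/- arXiv:1912.10154 — 4 statements merged into one kernel-verified Lean document; each statement's English description precedes it below -/
import Mathlib

section
/- The Revised Silhouette index RS is granularity consistent: if d' is a granularity consistent transformation of d, then RS(S,d') ≥ RS(S,d). -/
open Finset

/-- The set of samples in class `j`. -/
def cls {n k : ℕ} (ℓ : Fin n → Fin k) (j : Fin k) : Finset (Fin n) :=
  Finset.univ.filter (fun x => ℓ x = j)

/-- Mean intra-class distance from `x` to the other samples of its class. -/
noncomputable def aVal {n k : ℕ} (ℓ : Fin n → Fin k) (d : Fin n → Fin n → ℝ)
    (x : Fin n) : ℝ :=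
  (∑ y ∈ (cls ℓ (ℓ x)).erase x, d x y) / (((cls ℓ (ℓ x)).card : ℝ) - 1)

/-- Mean distance from `x` to the samples of class `j`. -/
noncomputable def meanDist {n k : ℕ} (ℓ : Fin n → Fin k) (d : Fin n → Fin n → ℝ)
    (x : Fin n) (j : Fin k) : ℝ :=
  (∑ y ∈ cls ℓ j, d x y) / ((cls ℓ j).card : ℝ)

/-- `b(x)`: the minimum, over classes `j` other than `x`'s class, of the mean
distance from `x` to class `j`. -/
noncomputable def bVal {n k : ℕ} (ℓ : Fin n → Fin k) (d : Fin n → Fin n → ℝ)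
    (x : Fin n) : ℝ :=
  sInf {r : ℝ | ∃ j, j ≠ ℓ x ∧ r = meanDist ℓ d x j}

/-- The Revised Silhouette index. -/
noncomputable def RS {n k : ℕ} (ℓ : Fin n → Fin k) (d : Fin n → Fin n → ℝ) : ℝ :=
  (1 / (n : ℝ)) * ∑ x, bVal ℓ d x / aVal ℓ d x

/-- RS is granularity consistent. -/
theorem RS_granularity_consistent {n k : ℕ} (hk : 2 ≤ k)
    (ℓ : Fin n → Fin k) (hcls : ∀ j, 2 ≤ (cls ℓ j).card)
    (d d' : Fin n → Fin n → ℝ)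
    (hsymm : ∀ x y, d x y = d y x) (hsymm' : ∀ x y, d' x y = d' y x)
    (hpos : ∀ x y, x ≠ y → 0 < d x y) (hpos' : ∀ x y, x ≠ y → 0 < d' x y)
    -- d' is a granularity consistent transformation of d
    (hintra : ∀ x y, ℓ x = ℓ y → d' x y ≤ d x y)
    (hinter : ∀ x y, ℓ x ≠ ℓ y → d x y ≤ d' x y)
    (ha : ∀ x, 0 < aVal ℓ d x) (ha' : ∀ x, 0 < aVal ℓ d' x) :
    RS ℓ d ≤ RS ℓ d' := by
  have hmd : ∀ (e : Fin n → Fin n → ℝ), (∀ x y, x ≠ y → 0 < e x y) →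
      ∀ x j, j ≠ ℓ x → 0 ≤ meanDist ℓ e x j := by
    intro e hepos x j hj
    apply div_nonneg _ (Nat.cast_nonneg _)
    apply Finset.sum_nonneg
    intro y hy
    have hy' : ℓ y = j := by simpa [cls] using hy
    have : x ≠ y := by rintro rfl; exact hj hy'.symm
    exact (hepos x y this).le
  have hSne : ∀ (e : Fin n → Fin n → ℝ) x,
      {r : ℝ | ∃ j, j ≠ ℓ x ∧ r = meanDist ℓ e x j}.Nonempty := by
    intro e x
    have : Nontrivial (Fin k) := Fin.nontrivial_iff_two_le.mpr hk
    obtain ⟨j, hj⟩ := exists_ne (ℓ x)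
    exact ⟨meanDist ℓ e x j, j, hj, rfl⟩
  have hbdd : ∀ x, BddBelow {r : ℝ | ∃ j, j ≠ ℓ x ∧ r = meanDist ℓ d x j} := by
    intro x
    exact ⟨0, by rintro r ⟨j, hj, rfl⟩; exact hmd d hpos x j hj⟩
  have hb0 : ∀ x, 0 ≤ bVal ℓ d x := by
    intro x
    apply le_csInf (hSne d x)
    rintro r ⟨j, hj, rfl⟩
    exact hmd d hpos x j hj
  have hble : ∀ x, bVal ℓ d x ≤ bVal ℓ d' x := by
    intro x
    apply le_csInf (hSne d' x)
    rintro r ⟨j, hj, rfl⟩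
    have h1 : bVal ℓ d x ≤ meanDist ℓ d x j := csInf_le (hbdd x) ⟨j, hj, rfl⟩
    refine h1.trans ?_
    unfold meanDist
    have hcj : (0:ℝ) < ((cls ℓ j).card : ℝ) := by have := hcls j; positivity
    gcongr with y hy
    have hy' : ℓ y = j := by simpa [cls] using hy
    exact hinter x y (by rw [hy']; exact fun h => hj h.symm)
  have hale : ∀ x, aVal ℓ d' x ≤ aVal ℓ d x := by
    intro x
    unfold aVal
    have hc : (0:ℝ) < ((cls ℓ (ℓ x)).card : ℝ) - 1 := by
      have := hcls (ℓ x)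
      have : (2:ℝ) ≤ ((cls ℓ (ℓ x)).card : ℝ) := by exact_mod_cast this
      linarith
    gcongr with y hy
    have hy' : ℓ y = ℓ x := by
      have := Finset.mem_of_mem_erase hy
      simpa [cls] using this
    exact hintra x y hy'.symm
  unfold RS
  apply mul_le_mul_of_nonneg_left _ (by positivity)
  apply Finset.sum_le_sum
  intro x _
  exact div_le_div₀ (le_trans (hb0 x) (hble x)) (hble x) (ha' x) (hale x)
end

section
/- The Ranking with Medoids index RankM is granularity consistent: if d' is a granularity consistent transformation of d (with strict tie-breaking preserved), then for each sample the rank of its own class medoid among all class medoids does not increase, and hence RankM(S,d') ≥ RankM(S,d). -/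
open Finset

/-- The rank of sample `x`'s own class medoid among all class medoids sorted by
increasing distance to `x` (assuming no ties). -/
noncomputable def medoidRank {n k : ℕ} (ℓ : Fin n → Fin k) (c : Fin k → Fin n)
    (d : Fin n → Fin n → ℝ) (x : Fin n) : ℕ :=
  1 + (Finset.univ.filter
        (fun i : Fin k => i ≠ ℓ x ∧ d x (c i) < d x (c (ℓ x)))).card

/-- The Ranking with Medoids index. -/
noncomputable def RankM {n k : ℕ} (ℓ : Fin n → Fin k) (c : Fin k → Fin n)
    (d : Fin n → Fin n → ℝ) : ℝ :=
  1 - ((k : ℝ) / ((n : ℝ) * ((k : ℝ) - 1))) *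
    ∑ x, (1 - 1 / (medoidRank ℓ c d x : ℝ))

/-- RankM is granularity consistent. -/
theorem RankM_granularity_consistent {n k : ℕ} (hn : 0 < n) (hk : 2 ≤ k)
    (ℓ : Fin n → Fin k) (c : Fin k → Fin n) (hc : ∀ i, ℓ (c i) = i)
    (d d' : Fin n → Fin n → ℝ)
    (hsymm : ∀ x y, d x y = d y x) (hsymm' : ∀ x y, d' x y = d' y x)
    (hnonneg : ∀ x y, 0 ≤ d x y) (hnonneg' : ∀ x y, 0 ≤ d' x y)
    -- no ties among distances from a sample to the medoids
    (hties : ∀ x i j, d x (c i) = d x (c j) → i = j)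
    (hties' : ∀ x i j, d' x (c i) = d' x (c j) → i = j)
    -- d' is a granularity consistent transformation of d
    (hintra : ∀ x y, ℓ x = ℓ y → d' x y ≤ d x y)
    (hinter : ∀ x y, ℓ x ≠ ℓ y → d x y ≤ d' x y) :
    (∀ x, medoidRank ℓ c d' x ≤ medoidRank ℓ c d x) ∧
      RankM ℓ c d ≤ RankM ℓ c d' := by
  have hrank : ∀ x, medoidRank ℓ c d' x ≤ medoidRank ℓ c d x := by
    intro x
    unfold medoidRank
    have hsub : (Finset.univ.filter
        (fun i : Fin k => i ≠ ℓ x ∧ d' x (c i) < d' x (c (ℓ x)))) ⊆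
        (Finset.univ.filter
        (fun i : Fin k => i ≠ ℓ x ∧ d x (c i) < d x (c (ℓ x)))) := by
      intro i hi
      simp only [Finset.mem_filter, Finset.mem_univ, true_and] at hi ⊢
      obtain ⟨hne, hlt⟩ := hi
      refine ⟨hne, ?_⟩
      have h1 : d x (c i) ≤ d' x (c i) := by
        apply hinter
        rw [hc]
        exact fun h => hne h.symm
      have h2 : d' x (c (ℓ x)) ≤ d x (c (ℓ x)) := by
        apply hintra
        rw [hc]
      linarith
    exact Nat.add_le_add_left (Finset.card_le_card hsub) 1
  refine ⟨hrank, ?_⟩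
  unfold RankM
  have hcoef : (0:ℝ) ≤ (k : ℝ) / ((n : ℝ) * ((k : ℝ) - 1)) := by
    apply div_nonneg (Nat.cast_nonneg k)
    have : (1:ℝ) ≤ (k:ℝ) := by exact_mod_cast Nat.one_le_of_lt hk
    exact mul_nonneg (Nat.cast_nonneg n) (by linarith)
  have hsum : ∑ x, (1 - 1 / (medoidRank ℓ c d' x : ℝ)) ≤
      ∑ x, (1 - 1 / (medoidRank ℓ c d x : ℝ)) := by
    apply Finset.sum_le_sum
    intro x _
    have h1 : (0:ℝ) < (medoidRank ℓ c d' x : ℝ) := by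
      have : 0 < medoidRank ℓ c d' x := Nat.succ_le_of_lt (Nat.lt_of_lt_of_le Nat.zero_lt_one (Nat.le_add_right 1 _))
      exact_mod_cast this
    have h2 : (medoidRank ℓ c d' x : ℝ) ≤ (medoidRank ℓ c d x : ℝ) := by
      exact_mod_cast hrank x
    have := one_div_le_one_div_of_le h1 h2
    linarith
  nlinarith [mul_le_mul_of_nonneg_left hsum hcoef]
end

section
/- The Ranking index Rank is granularity consistent: if d' is a granularity consistent transformation of d, then for every sample x_i and every same-class sample, its rank in the sorted list of all other samples by distance to x_i does not increase, hence the average precision term Σ_j j/R_{ij} does not decrease, and Rank(S,d') ≥ Rank(S,d). -/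
open Finset

/-- The rank of sample `y` when all samples other than `x` are sorted by
increasing distance to `x`. -/
noncomputable def rAll {n : ℕ} (d : Fin n → Fin n → ℝ) (x y : Fin n) : ℕ :=
  1 + (((Finset.univ.erase x).erase y).filter (fun z => d x z < d x y)).card

/-- The rank of `y` among the same-class samples of `x`, sorted by increasing
distance to `x`. -/
noncomputable def rSame {n k : ℕ} (ℓ : Fin n → Fin k) (d : Fin n → Fin n → ℝ)
    (x y : Fin n) : ℕ :=
  1 + ((((cls ℓ (ℓ x)).erase x).erase y).filter (fun z => d x z < d x y)).card

/-- The Average Precision term `Σ_j j / R_{ij}` for sample `x`: since all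
distances from `x` are distinct, the `j`-th same-class sample in sorted order
contributes `rSame / rAll`. -/
noncomputable def AP {n k : ℕ} (ℓ : Fin n → Fin k) (d : Fin n → Fin n → ℝ)
    (x : Fin n) : ℝ :=
  ∑ y ∈ (cls ℓ (ℓ x)).erase x, (rSame ℓ d x y : ℝ) / (rAll d x y : ℝ)

/-- The Ranking index. -/
noncomputable def RankIdx {n k : ℕ} (ℓ : Fin n → Fin k)
    (d : Fin n → Fin n → ℝ) : ℝ :=
  1 - (1 / ((n : ℝ) - 1)) * ∑ x, (1 - AP ℓ d x)

/-- The sorted list `R_{i1} < R_{i2} < …` of the ranks of the same-class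
samples of `x`. -/
noncomputable def ranksList {n k : ℕ} (ℓ : Fin n → Fin k)
    (d : Fin n → Fin n → ℝ) (x : Fin n) : List ℕ :=
  Finset.sort (((cls ℓ (ℓ x)).erase x).image (fun y => rAll d x y)) (· ≤ ·)

/-! ### Auxiliary lemmas -/

lemma card_filter_lt_sort (I : Finset ℕ) (j : ℕ) (hj : j < (Finset.sort I (· ≤ ·)).length) :
    (I.filter (fun r => r < (Finset.sort I (· ≤ ·))[j])).card = j := by
  set L := Finset.sort I (· ≤ ·) with hL
  have hnd : L.Nodup := Finset.sort_nodup I _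
  have hs : L.SortedLT := Finset.sortedLT_sort I
  have hmono : ∀ i i' (hi : i < L.length) (hi' : i' < L.length), i < i' → L[i] < L[i'] := by
    intro i i' hi hi' h
    exact hs.getElem_lt_getElem_of_lt h
  have hset : I.filter (fun r => r < L[j]) = (L.take j).toFinset := by
    ext r
    simp only [Finset.mem_filter, List.mem_toFinset, List.mem_take_iff_getElem]
    constructor
    · rintro ⟨hrI, hrlt⟩
      have hrL : r ∈ L := (Finset.mem_sort (α := ℕ) (· ≤ ·)).2 hrI
      obtain ⟨i, hi, rfl⟩ := List.mem_iff_getElem.1 hrL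
      refine ⟨i, ?_, rfl⟩
      have hij : i < j := by
        by_contra hc
        push_neg at hc
        rcases eq_or_lt_of_le hc with rfl | h
        · exact lt_irrefl _ hrlt
        · exact lt_asymm hrlt (hmono j i hj hi h)
      omega
    · rintro ⟨i, hi, rfl⟩
      have hij : i < j := lt_of_lt_of_le hi (min_le_left _ _)
      have hiL : i < L.length := lt_of_lt_of_le hi (min_le_right _ _)
      exact ⟨(Finset.mem_sort (α := ℕ) (· ≤ ·)).1 (List.getElem_mem _), hmono i j hiL hj hij⟩
  rw [hset, List.toFinset_card_of_nodup ((List.take_sublist _ _).nodup hnd)]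
  simp only [List.length_take]
  omega

lemma sum_eq_sum_sort (I : Finset ℕ) (g : ℕ → ℝ) :
    ∑ r ∈ I, g r
      = ∑ j ∈ Finset.range (Finset.sort I (· ≤ ·)).length,
          g ((Finset.sort I (· ≤ ·)).getD j 0) := by
  set L := Finset.sort I (· ≤ ·) with hL
  have hnd : L.Nodup := Finset.sort_nodup I _
  refine Finset.sum_bij' (i := fun r _ => List.idxOf r L) (j := fun j _ => L.getD j 0)
    ?_ ?_ ?_ ?_ ?_
  · intro r hr
    simp only [Finset.mem_range]
    exact List.idxOf_lt_length_iff.2 ((Finset.mem_sort (α := ℕ) (· ≤ ·)).2 hr)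
  · intro j hj
    have hjL : j < L.length := Finset.mem_range.1 hj
    show L.getD j 0 ∈ I
    rw [List.getD_eq_getElem _ _ hjL]
    exact (Finset.mem_sort (α := ℕ) (· ≤ ·)).1 (List.getElem_mem _)
  · intro r hr
    have h := List.idxOf_lt_length_iff.2 ((Finset.mem_sort (α := ℕ) (· ≤ ·)).2 hr)
    show L.getD (List.idxOf r L) 0 = r
    rw [List.getD_eq_getElem _ _ h]
    exact List.getElem_idxOf h
  · intro j hj
    have hjL : j < L.length := Finset.mem_range.1 hj
    show List.idxOf (L.getD j 0) L = j
    rw [List.getD_eq_getElem _ _ hjL]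
    exact List.Nodup.idxOf_getElem hnd _ _
  · intro r hr
    have h := List.idxOf_lt_length_iff.2 ((Finset.mem_sort (α := ℕ) (· ≤ ·)).2 hr)
    show g r = g (L.getD (List.idxOf r L) 0)
    rw [List.getD_eq_getElem _ _ h, List.getElem_idxOf h]

lemma rAll_eq {n : ℕ} (d : Fin n → Fin n → ℝ) (x y : Fin n) :
    rAll d x y = 1 + ((Finset.univ.erase x).filter (fun z => d x z < d x y)).card := by
  unfold rAll
  rw [Finset.filter_erase, Finset.erase_eq_of_notMem (by simp)]

lemma rSame_eq {n k : ℕ} (ℓ : Fin n → Fin k) (d : Fin n → Fin n → ℝ) (x y : Fin n) :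
    rSame ℓ d x y
      = 1 + (((cls ℓ (ℓ x)).erase x).filter (fun z => d x z < d x y)).card := by
  unfold rSame
  rw [Finset.filter_erase, Finset.erase_eq_of_notMem (by simp)]

lemma one_le_rAll {n : ℕ} (d : Fin n → Fin n → ℝ) (x y : Fin n) : 1 ≤ rAll d x y :=
  Nat.le_add_right 1 _

lemma rAll_lt_rAll {n : ℕ} {d : Fin n → Fin n → ℝ} {x y z : Fin n}
    (hy : y ≠ x) (hz : z ≠ x) (h : d x z < d x y) : rAll d x z < rAll d x y := by
  rw [rAll_eq, rAll_eq]
  refine Nat.add_lt_add_left (Finset.card_lt_card ?_) 1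
  rw [Finset.ssubset_iff_of_subset]
  · exact ⟨z, Finset.mem_filter.2 ⟨Finset.mem_erase.2 ⟨hz, Finset.mem_univ z⟩, h⟩,
      fun hc => lt_irrefl _ (Finset.mem_filter.1 hc).2⟩
  · intro w hw
    rcases Finset.mem_filter.1 hw with ⟨hw1, hw2⟩
    exact Finset.mem_filter.2 ⟨hw1, hw2.trans h⟩

lemma rAll_lt_iff {n : ℕ} {d : Fin n → Fin n → ℝ} {x : Fin n}
    (hdx : ∀ y z, y ≠ x → z ≠ x → d x y = d x z → y = z) {y z : Fin n}
    (hy : y ≠ x) (hz : z ≠ x) : rAll d x z < rAll d x y ↔ d x z < d x y := by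
  constructor
  · intro h
    by_contra hc
    push_neg at hc
    rcases eq_or_lt_of_le hc with heq | hlt
    · rw [hdx y z hy hz heq] at h; exact lt_irrefl _ h
    · exact lt_asymm h (rAll_lt_rAll hz hy hlt)
  · exact rAll_lt_rAll hy hz

lemma rAll_injOn {n : ℕ} {d : Fin n → Fin n → ℝ} {x : Fin n}
    (hdx : ∀ y z, y ≠ x → z ≠ x → d x y = d x z → y = z) {y z : Fin n}
    (hy : y ≠ x) (hz : z ≠ x) (h : rAll d x y = rAll d x z) : y = z := by
  rcases lt_trichotomy (d x y) (d x z) with hlt | heq | hlt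
  · exact absurd h (Nat.ne_of_lt (rAll_lt_rAll hz hy hlt))
  · exact hdx y z hy hz heq
  · exact absurd h.symm (Nat.ne_of_lt (rAll_lt_rAll hy hz hlt))

lemma S_eq {n k : ℕ} (ℓ : Fin n → Fin k) (x : Fin n) :
    (cls ℓ (ℓ x)).erase x = (Finset.univ.erase x).filter (fun z => ℓ z = ℓ x) := by
  ext z
  simp only [cls, Finset.mem_erase, Finset.mem_filter, Finset.mem_univ, true_and, and_true]

lemma mem_S {n k : ℕ} {ℓ : Fin n → Fin k} {x z : Fin n}
    (h : z ∈ (cls ℓ (ℓ x)).erase x) : z ≠ x ∧ ℓ z = ℓ x := by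
  rw [S_eq] at h
  rcases Finset.mem_filter.1 h with ⟨h1, h2⟩
  exact ⟨(Finset.mem_erase.1 h1).1, h2⟩

lemma card_same_eq {n k : ℕ} {ℓ : Fin n → Fin k} {d : Fin n → Fin n → ℝ} {x : Fin n}
    (hdx : ∀ y z, y ≠ x → z ≠ x → d x y = d x z → y = z) {y : Fin n}
    (hy : y ∈ (cls ℓ (ℓ x)).erase x) :
    (((cls ℓ (ℓ x)).erase x).filter (fun z => d x z < d x y)).card
      = ((((cls ℓ (ℓ x)).erase x).image (fun w => rAll d x w)).filter
          (fun r => r < rAll d x y)).card := by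
  set S := (cls ℓ (ℓ x)).erase x with hS
  have himg : (S.image (fun w => rAll d x w)).filter (fun r => r < rAll d x y)
      = (S.filter (fun z => rAll d x z < rAll d x y)).image (fun w => rAll d x w) :=
    Finset.filter_image
  rw [himg, Finset.card_image_of_injOn
    (fun a ha b hb hab => rAll_injOn hdx (mem_S (Finset.mem_filter.1 ha).1).1
      (mem_S (Finset.mem_filter.1 hb).1).1 hab)]
  congr 1
  refine Finset.filter_congr ?_
  intro z hz
  exact (rAll_lt_iff hdx (mem_S hy).1 (mem_S hz).1).symm

lemma rSame_card {n k : ℕ} {ℓ : Fin n → Fin k} {d : Fin n → Fin n → ℝ} {x : Fin n}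
    (hdx : ∀ y z, y ≠ x → z ≠ x → d x y = d x z → y = z) {y : Fin n}
    (hy : y ∈ (cls ℓ (ℓ x)).erase x) :
    rSame ℓ d x y
      = 1 + ((((cls ℓ (ℓ x)).erase x).image (fun w => rAll d x w)).filter
          (fun r => r < rAll d x y)).card := by
  rw [rSame_eq, card_same_eq hdx hy]

lemma ranksList_length {n k : ℕ} {ℓ : Fin n → Fin k} {d : Fin n → Fin n → ℝ} {x : Fin n}
    (hdx : ∀ y z, y ≠ x → z ≠ x → d x y = d x z → y = z) :
    (ranksList ℓ d x).length = ((cls ℓ (ℓ x)).erase x).card := by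
  unfold ranksList
  rw [Finset.length_sort, Finset.card_image_of_injOn
    (fun a ha b hb hab => rAll_injOn hdx (mem_S ha).1 (mem_S hb).1 hab)]

lemma rankGC_le {n k : ℕ} {ℓ : Fin n → Fin k} {d d' : Fin n → Fin n → ℝ} {x : Fin n}
    (hdx : ∀ y z, y ≠ x → z ≠ x → d x y = d x z → y = z)
    (hdx' : ∀ y z, y ≠ x → z ≠ x → d' x y = d' x z → y = z)
    (hintra : ∀ y, ℓ x = ℓ y → d' x y ≤ d x y)
    (hinter : ∀ y, ℓ x ≠ ℓ y → d x y ≤ d' x y)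
    (j : ℕ) (hj' : j < (ranksList ℓ d' x).length) (hj : j < (ranksList ℓ d x).length) :
    (ranksList ℓ d' x)[j] ≤ (ranksList ℓ d x)[j] := by
  set S := (cls ℓ (ℓ x)).erase x with hS
  unfold ranksList at hj hj' ⊢
  set I := S.image (fun y => rAll d x y) with hI
  set I' := S.image (fun y => rAll d' x y) with hI'
  obtain ⟨y, hyS, hyr⟩ := Finset.mem_image.1
    ((Finset.mem_sort (α := ℕ) (· ≤ ·)).1 (List.getElem_mem hj))
  obtain ⟨y', hy'S, hy'r⟩ := Finset.mem_image.1
    ((Finset.mem_sort (α := ℕ) (· ≤ ·)).1 (List.getElem_mem hj'))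
  have hcard : (I.filter (fun r => r < rAll d x y)).card = j := by
    rw [hyr]; exact card_filter_lt_sort I j hj
  have hcard' : (I'.filter (fun r => r < rAll d' x y')).card = j := by
    rw [hy'r]; exact card_filter_lt_sort I' j hj'
  have hSd : (S.filter (fun z => d x z < d x y)).card = j :=
    (card_same_eq hdx hyS).trans hcard
  have hSd' : (S.filter (fun z => d' x z < d' x y')).card = j :=
    (card_same_eq hdx' hy'S).trans hcard'
  have hyx : y ≠ x := (mem_S hyS).1
  -- Step 1 : d' x y' ≤ d x y
  have hle : d' x y' ≤ d x y := by
    by_contra hc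
    push_neg at hc
    have hins : S.filter (fun w => d x w ≤ d x y)
        = insert y (S.filter (fun z => d x z < d x y)) := by
      ext w
      simp only [Finset.mem_filter, Finset.mem_insert]
      constructor
      · rintro ⟨hwS, hwle⟩
        rcases eq_or_lt_of_le hwle with heq | hlt
        · exact Or.inl (hdx w y (mem_S hwS).1 hyx heq)
        · exact Or.inr ⟨hwS, hlt⟩
      · rintro (rfl | ⟨hwS, hlt⟩)
        · exact ⟨hyS, le_refl _⟩
        · exact ⟨hwS, le_of_lt hlt⟩
    have hc1 : (S.filter (fun w => d x w ≤ d x y)).card = j + 1 := by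
      rw [hins, Finset.card_insert_of_notMem, hSd]
      exact fun hmem => lt_irrefl _ (Finset.mem_filter.1 hmem).2
    have hsub : S.filter (fun w => d x w ≤ d x y)
        ⊆ S.filter (fun z => d' x z < d' x y') := by
      intro w hw
      rcases Finset.mem_filter.1 hw with ⟨hwS, hwle⟩
      refine Finset.mem_filter.2 ⟨hwS, ?_⟩
      calc d' x w ≤ d x w := hintra w (mem_S hwS).2.symm
        _ ≤ d x y := hwle
        _ < d' x y' := hc
    have hcc := Finset.card_le_card hsub
    rw [hc1, hSd'] at hcc
    omega
  -- Step 2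
  rw [← hyr, ← hy'r, rAll_eq, rAll_eq]
  have e1 := (Finset.card_filter_add_card_filter_not
    (s := (Finset.univ.erase x).filter (fun z => d' x z < d' x y'))
    (p := fun z => ℓ z = ℓ x)).symm
  have e2 := (Finset.card_filter_add_card_filter_not
    (s := (Finset.univ.erase x).filter (fun z => d x z < d x y))
    (p := fun z => ℓ z = ℓ x)).symm
  have hsame' : ((Finset.univ.erase x).filter (fun z => d' x z < d' x y')).filter
      (fun z => ℓ z = ℓ x) = S.filter (fun z => d' x z < d' x y') := by
    rw [Finset.filter_comm, ← S_eq]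
  have hsame : ((Finset.univ.erase x).filter (fun z => d x z < d x y)).filter
      (fun z => ℓ z = ℓ x) = S.filter (fun z => d x z < d x y) := by
    rw [Finset.filter_comm, ← S_eq]
  rw [hsame'] at e1
  rw [hsame] at e2
  have hout : (((Finset.univ.erase x).filter (fun z => d' x z < d' x y')).filter
        (fun z => ¬ ℓ z = ℓ x)).card
      ≤ (((Finset.univ.erase x).filter (fun z => d x z < d x y)).filter
        (fun z => ¬ ℓ z = ℓ x)).card := by
    apply Finset.card_le_card
    intro t ht
    simp only [Finset.mem_filter] at ht ⊢
    obtain ⟨⟨ht1, ht2⟩, ht3⟩ := ht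
    refine ⟨⟨ht1, ?_⟩, ht3⟩
    calc d x t ≤ d' x t := hinter t (fun h => ht3 h.symm)
      _ < d' x y' := ht2
      _ ≤ d x y := hle
  rw [hSd'] at e1
  rw [hSd] at e2
  omega

lemma AP_formula {n k : ℕ} {ℓ : Fin n → Fin k} {d : Fin n → Fin n → ℝ} {x : Fin n}
    (hdx : ∀ y z, y ≠ x → z ≠ x → d x y = d x z → y = z) :
    AP ℓ d x = ∑ j ∈ Finset.range (ranksList ℓ d x).length,
        ((j : ℝ) + 1) / ((ranksList ℓ d x).getD j 0 : ℕ) := by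
  set S := (cls ℓ (ℓ x)).erase x with hS
  set I := S.image (fun y => rAll d x y) with hI
  have h1 : AP ℓ d x
      = ∑ y ∈ S, ((1 + (I.filter (fun r => r < rAll d x y)).card : ℕ) : ℝ)
          / (rAll d x y : ℝ) := by
    unfold AP
    refine Finset.sum_congr rfl ?_
    intro y hy
    rw [rSame_card hdx hy]
  have h2 : ∑ r ∈ I, ((1 + (I.filter (fun s => s < r)).card : ℕ) : ℝ) / (r : ℝ)
      = ∑ y ∈ S, ((1 + (I.filter (fun r => r < rAll d x y)).card : ℕ) : ℝ)
          / (rAll d x y : ℝ) :=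
    Finset.sum_image (fun a ha b hb hab => rAll_injOn hdx (mem_S ha).1 (mem_S hb).1 hab)
  rw [h1, ← h2, sum_eq_sum_sort I (fun r => ((1 + (I.filter (fun s => s < r)).card : ℕ) : ℝ) / (r : ℝ))]
  unfold ranksList
  refine Finset.sum_congr rfl ?_
  intro j hj
  have hjL : j < (Finset.sort I (· ≤ ·)).length := Finset.mem_range.1 hj
  rw [List.getD_eq_getElem _ _ hjL, card_filter_lt_sort I j hjL]
  push_cast
  ring

/-- the Ranking index is granularity consistent. -/
theorem Rank_granularity_consistent {n k : ℕ} (hn : 2 ≤ n)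
    (ℓ : Fin n → Fin k) (d d' : Fin n → Fin n → ℝ)
    (hsymm : ∀ x y, d x y = d y x) (hsymm' : ∀ x y, d' x y = d' y x)
    -- all pairwise distances from each sample are distinct, for both d and d'
    (hdist : ∀ x y z, y ≠ x → z ≠ x → d x y = d x z → y = z)
    (hdist' : ∀ x y z, y ≠ x → z ≠ x → d' x y = d' x z → y = z)
    -- d' is a granularity consistent transformation of d
    (hintra : ∀ x y, ℓ x = ℓ y → d' x y ≤ d x y)
    (hinter : ∀ x y, ℓ x ≠ ℓ y → d x y ≤ d' x y) :
    -- sorted ranks of same-class samples do not increase,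
    (∀ x j (h' : j < (ranksList ℓ d' x).length) (h : j < (ranksList ℓ d x).length),
        (ranksList ℓ d' x)[j] ≤ (ranksList ℓ d x)[j]) ∧
    -- hence the average precision term does not decrease,
    (∀ x, AP ℓ d x ≤ AP ℓ d' x) ∧
    -- and Rank(S,d') ≥ Rank(S,d)
    RankIdx ℓ d ≤ RankIdx ℓ d' := by
  have part1 : ∀ x j (h' : j < (ranksList ℓ d' x).length) (h : j < (ranksList ℓ d x).length),
      (ranksList ℓ d' x)[j] ≤ (ranksList ℓ d x)[j] := by
    intro x j h' h
    exact rankGC_le (hdist x) (hdist' x) (fun y => hintra x y) (fun y => hinter x y) j h' h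
  have part2 : ∀ x, AP ℓ d x ≤ AP ℓ d' x := by
    intro x
    rw [AP_formula (hdist x), AP_formula (hdist' x)]
    have hlen : (ranksList ℓ d x).length = (ranksList ℓ d' x).length := by
      rw [ranksList_length (hdist x), ranksList_length (hdist' x)]
    rw [hlen]
    refine Finset.sum_le_sum ?_
    intro j hj
    have hj' : j < (ranksList ℓ d' x).length := Finset.mem_range.1 hj
    have hjd : j < (ranksList ℓ d x).length := hlen ▸ hj'
    have hpos : 0 < (ranksList ℓ d' x).getD j 0 := by
      rw [List.getD_eq_getElem _ _ hj']
      obtain ⟨y, _, hyr⟩ := Finset.mem_image.1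
        ((Finset.mem_sort (α := ℕ) (· ≤ ·)).1 (List.getElem_mem hj'))
      rw [← hyr]
      exact one_le_rAll d' x y
    have hle : (ranksList ℓ d' x).getD j 0 ≤ (ranksList ℓ d x).getD j 0 := by
      rw [List.getD_eq_getElem _ _ hj', List.getD_eq_getElem _ _ hjd]
      exact part1 x j hj' hjd
    have h0 : (0 : ℝ) ≤ (j : ℝ) + 1 := by positivity
    have hposR : (0 : ℝ) < ((ranksList ℓ d' x).getD j 0 : ℕ) := by exact_mod_cast hpos
    have hleR : (((ranksList ℓ d' x).getD j 0 : ℕ) : ℝ)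
        ≤ (((ranksList ℓ d x).getD j 0 : ℕ) : ℝ) := by exact_mod_cast hle
    exact div_le_div_of_nonneg_left h0 hposR hleR
  refine ⟨part1, part2, ?_⟩
  unfold RankIdx
  have hsum : ∑ x, (1 - AP ℓ d' x) ≤ ∑ x, (1 - AP ℓ d x) :=
    Finset.sum_le_sum (fun x _ => by linarith [part2 x])
  have hc : (0 : ℝ) ≤ 1 / ((n : ℝ) - 1) := by
    have h2 : (2 : ℝ) ≤ (n : ℝ) := by exact_mod_cast hn
    have : (0 : ℝ) < (n : ℝ) - 1 := by linarith
    positivity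
  nlinarith [mul_le_mul_of_nonneg_left hsum hc]
end

section
/- The Baker-Hubert Gamma index (ratio form) is granularity consistent: if d' is a granularity consistent transformation of d, then N'^+ ≥ N^+ and N'^− ≤ N^−, hence BHG(S,d') ≥ BHG(S,d). -/
open Finset

/-- `N⁺`: the number of (intra-class pair, inter-class pair) combinations where
the intra-class distance is strictly smaller than the inter-class distance. -/
noncomputable def Npos {n k : ℕ} (ℓ : Fin n → Fin k)
    (d : Fin n → Fin n → ℝ) : ℕ :=
  (Finset.univ.filter (fun q : (Fin n × Fin n) × Fin n × Fin n =>
    q.1.1 ≠ q.1.2 ∧ ℓ q.1.1 = ℓ q.1.2 ∧ ℓ q.2.1 ≠ ℓ q.2.2 ∧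
      d q.1.1 q.1.2 < d q.2.1 q.2.2)).card

/-- `N⁻`: the number of such combinations where the intra-class distance is
strictly larger. -/
noncomputable def Nneg {n k : ℕ} (ℓ : Fin n → Fin k)
    (d : Fin n → Fin n → ℝ) : ℕ :=
  (Finset.univ.filter (fun q : (Fin n × Fin n) × Fin n × Fin n =>
    q.1.1 ≠ q.1.2 ∧ ℓ q.1.1 = ℓ q.1.2 ∧ ℓ q.2.1 ≠ ℓ q.2.2 ∧
      d q.2.1 q.2.2 < d q.1.1 q.1.2)).card

/-- The Baker-Hubert Gamma index (ratio form). -/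
noncomputable def BHG {n k : ℕ} (ℓ : Fin n → Fin k)
    (d : Fin n → Fin n → ℝ) : ℝ :=
  (Npos ℓ d : ℝ) / (Nneg ℓ d : ℝ)

/-- BHG is granularity consistent. -/
theorem BHG_granularity_consistent {n k : ℕ}
    (ℓ : Fin n → Fin k) (d d' : Fin n → Fin n → ℝ)
    (hsymm : ∀ x y, d x y = d y x) (hsymm' : ∀ x y, d' x y = d' y x)
    -- d' is a granularity consistent transformation of d
    (hintra : ∀ x y, ℓ x = ℓ y → d' x y ≤ d x y)
    (hinter : ∀ x y, ℓ x ≠ ℓ y → d x y ≤ d' x y)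
    (hN : 0 < Nneg ℓ d) (hN' : 0 < Nneg ℓ d') :
    Npos ℓ d ≤ Npos ℓ d' ∧ Nneg ℓ d' ≤ Nneg ℓ d ∧ BHG ℓ d ≤ BHG ℓ d' := by
  have hpos : Npos ℓ d ≤ Npos ℓ d' := by
    apply Finset.card_le_card
    intro q hq
    simp only [Finset.mem_filter, Finset.mem_univ, true_and] at *
    obtain ⟨h1, h2, h3, h4⟩ := hq
    exact ⟨h1, h2, h3,
      lt_of_le_of_lt (hintra _ _ h2) (lt_of_lt_of_le h4 (hinter _ _ h3))⟩
  have hneg : Nneg ℓ d' ≤ Nneg ℓ d := by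
    apply Finset.card_le_card
    intro q hq
    simp only [Finset.mem_filter, Finset.mem_univ, true_and] at *
    obtain ⟨h1, h2, h3, h4⟩ := hq
    exact ⟨h1, h2, h3,
      lt_of_le_of_lt (hinter _ _ h3) (lt_of_lt_of_le h4 (hintra _ _ h2))⟩
  refine ⟨hpos, hneg, ?_⟩
  unfold BHG
  apply div_le_div₀ (by positivity) (by exact_mod_cast hpos)
    (by exact_mod_cast hN') (by exact_mod_cast hneg)
end
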